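/- Let Γ be a colored tree with principal subtrees Γ_1, …, Γ_m. For each i let r_i be the number of minimally complete subsets of E(Γ_i) if Γ_i is non-trivial, and set r_i = 0 if Γ_i is trivial. Then the number of minimally complete subsets of E(Γ) equals (r_1 + 1)(r_2 + 1)⋯(r_m + 1). -/

import Mathlib

noncomputable section
open Classical

/-- A rose tree whose leaves ("colored vertices") carry labels of type `α` and whose
internal vertices ("uncolored vertices") are unlabelled. -/
inductive CTree (α : Type) : Type
  | leaf (a : α) : CTree α
  | node (ts : List (CTree α)) : CTree α

namespace CTree

variable {α : Type}

/-- The subtree of `t` at a position `p` (a list of child indices), if it exists. -/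
def sub : CTree α → List ℕ → Option (CTree α)
  | t, [] => some t
  | leaf _, _ :: _ => none
  | node ts, i :: p =>
      match ts[i]? with
      | some c => sub c p
      | none => none

/-- All lists of natural numbers of length at most `k` with entries `< m`. -/
def allLists (m : ℕ) : ℕ → List (List ℕ)
  | 0 => [[]]
  | k + 1 => [] :: (List.range m).flatMap (fun i => (allLists m k).map (i :: ·))

/-- The finite set of positions of vertices of `t`. -/
def vertS (t : CTree α) : Finset (List ℕ) :=
  (allLists (sizeOf t) (sizeOf t)).toFinset.filter (fun p => (t.sub p).isSome)

/-- The finite set of positions of uncolored (internal) vertices of `t`. -/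
def uncS (t : CTree α) : Finset (List ℕ) :=
  (allLists (sizeOf t) (sizeOf t)).toFinset.filter (fun p => ∃ ts, t.sub p = some (node ts))

/-- The finite set of positions of colored vertices (leaves) of `t`. -/
def colS (t : CTree α) : Finset (List ℕ) :=
  (allLists (sizeOf t) (sizeOf t)).toFinset.filter (fun p => ∃ a, t.sub p = some (leaf a))

/-- Edges of `t` are identified with the positions of non-root vertices (an edge joins
the vertex at `p ≠ []` to its parent at `p.dropLast`). -/
def edgeS (t : CTree α) : Finset (List ℕ) := (vertS t).erase []

/-- `t` is a colored tree: every internal vertex has at least one child (so the leaves,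
i.e. the childless vertices, are exactly the colored vertices) and the root is
uncolored. -/
def IsColoredTree (t : CTree α) : Prop :=
  (∀ p, t.sub p ≠ some (node ([] : List (CTree α)))) ∧ ∃ ts, t = node ts

/-- The weight `w_d ∈ M` of an edge `d`: the sum of the dual basis vectors `e_u^*`
over uncolored vertices `u` that are descendants of the upper endpoint of `d` but not
descendants of the lower endpoint of `d`. -/
def wt (t : CTree α) (d : List ℕ) : List ℕ → ℤ := fun u =>
  if u ∈ uncS t ∧ d.dropLast <+: u ∧ ¬ d <+: u then 1 else 0

/-- `s_v ∈ M` : the sum of `e_u^*` over the uncolored descendants `u` of `v`;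
`s(Γ) = sv t []`. -/
def sv (t : CTree α) (v : List ℕ) : List ℕ → ℤ := fun u =>
  if u ∈ uncS t ∧ v <+: u then 1 else 0

/-- The pairing between `M = Hom(ℤ^g, ℤ)` and `ℤ^g` (both realized as integer-valued
functions on the uncolored vertices of `t`). -/
def pairZ (t : CTree α) (μ x : List ℕ → ℤ) : ℤ := ∑ p ∈ uncS t, μ p * x p

/-- The pairing between `M` and `ℝ^g`. -/
def pairR (t : CTree α) (μ : List ℕ → ℤ) (x : List ℕ → ℝ) : ℝ :=
  ∑ p ∈ uncS t, (μ p : ℝ) * x p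

/-- The multiset of edges of the (downward) path from the vertex `v` to the vertex `c`;
each edge occurs with multiplicity one. -/
def pathEdges (t : CTree α) (v c : List ℕ) : Multiset (List ℕ) :=
  ((edgeS t).filter (fun d => v <+: d ∧ d ≠ v ∧ d <+: c)).val

/-- The relation `A ∼ B` on multisets of edges: `A` and `B` consist exactly of the edges
of two non-self-crossing paths from a common vertex to two colored vertices. -/
def Sim (t : CTree α) (A B : Multiset (List ℕ)) : Prop :=
  ∃ v ∈ vertS t, ∃ c₁ ∈ colS t, ∃ c₂ ∈ colS t, v <+: c₁ ∧ v <+: c₂ ∧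
    A = pathEdges t v c₁ ∧ B = pathEdges t v c₂

/-- `Y` is a minimally complete subset of the set of edges of `t`: every
(non-self-crossing) path from the root to a colored vertex contains exactly one edge
of `Y`. -/
def MinComplete (t : CTree α) (Y : Finset (List ℕ)) : Prop :=
  Y ⊆ edgeS t ∧ ∀ c ∈ colS t, ∃! d, d ∈ Y ∧ d <+: c

/-- The finite set of minimally complete subsets of the edge set of `t`. -/
def MCfin (t : CTree α) : Finset (Finset (List ℕ)) :=
  (edgeS t).powerset.filter (fun Y => MinComplete t Y)

/-- The dual cone `C(Γ) = {x ∈ ℝ^g | ⟨w_d, x⟩ ≥ 0 for all edges d}`. -/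
def dualCone (t : CTree α) : Set (List ℕ → ℝ) :=
  {x | (∀ p, p ∉ uncS t → x p = 0) ∧ ∀ d ∈ edgeS t, 0 ≤ pairR t (wt t d) x}

/-- The ray spanned by a vector `v`. -/
def ray (v : List ℕ → ℝ) : Set (List ℕ → ℝ) := {x | ∃ c : ℝ, 0 ≤ c ∧ x = c • v}

/-- `F` is a one-dimensional face (extreme ray) of the convex cone `C`. -/
def IsOneDimFace (C F : Set (List ℕ → ℝ)) : Prop :=
  F ⊆ C ∧ (∃ v, v ≠ 0 ∧ F = ray v) ∧
    ∀ x ∈ C, ∀ y ∈ C, x + y ∈ F → x ∈ F ∧ y ∈ F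

/-- The convex cone generated by a set `G ⊆ ℤ^g` inside `ℝ^g`: all finite nonnegative
real combinations of elements of `G`. -/
def coneHull (G : Set (List ℕ → ℤ)) : Set (List ℕ → ℝ) :=
  {x | ∃ (F : Finset (List ℕ → ℤ)) (c : (List ℕ → ℤ) → ℝ),
    ↑F ⊆ G ∧ (∀ v ∈ F, 0 ≤ c v) ∧
    x = ∑ v ∈ F, c v • (fun p => ((v p : ℤ) : ℝ))}

/-- `e_{v_0} ∈ ℤ^g`: the basis vector of the root vertex. -/
def e0 : List ℕ → ℤ := fun p => if p = [] then 1 else 0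

/-- The inclusion `ℤ^{g_i} → ℤ^g` corresponding to the `i`-th principal subtree. -/
def shift (i : ℕ) (f : List ℕ → ℤ) : List ℕ → ℤ := fun p =>
  match p with
  | [] => 0
  | j :: q => if j = i then f q else 0

def isNodeB : CTree α → Bool
  | leaf _ => false
  | node _ => true

/-- The recursively defined set `G(Γ) ⊆ ℤ^g`: `G(Γ)` consists of all vectors
`e_{v₀} + ∑_{i ∈ J} (w_i - e_{v₀})` where `J` ranges over subsets of the set of indices
of non-trivial principal subtrees and `w_i ∈ G(Γ_i)` (in particular if `g = 1` this is
just `{e_{v₀}}`). -/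
def Gset : CTree α → Set (List ℕ → ℤ)
  | leaf _ => ∅
  | node ts =>
      {v | ∃ (J : Finset (Fin ts.length)) (w : Fin ts.length → (List ℕ → ℤ)),
        (∀ i ∈ J, (ts.get i).isNodeB = true ∧ w i ∈ Gset (ts.get i)) ∧
        v = e0 + ∑ i ∈ J, (shift i.1 (w i) - e0)}
  termination_by t => sizeOf t
  decreasing_by
    have h1 : ts.get i ∈ ts := List.get_mem ts i
    have h2 := List.sizeOf_lt_of_mem h1
    simp only [CTree.node.sizeOf_spec]
    omega

/-- Transport of a set of edges of `Γ` to the `i`-th principal subtree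
(`Y ∩ E(Γ_i)`, rewritten in the coordinates of `Γ_i`). -/
def sect (i : ℕ) (Y : Finset (List ℕ)) : Finset (List ℕ) :=
  (Y.filter (fun p => p.head? = some i)).image List.tail

/-- The recursively defined vector `v_Y ∈ ℤ^g` attached to a (minimally complete) set
of edges `Y`: `v_Y = e_{v₀} + ∑_{i ∈ I} (v_{Y_i} - e_{v₀})` where
`I = {i | d_i ∉ Y}` and `Y_i = Y ∩ E(Γ_i)` (if `g = 1` this is just `e_{v₀}`). -/
def vY : CTree α → Finset (List ℕ) → (List ℕ → ℤ)
  | leaf _, _ => 0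
  | node ts, Y =>
      e0 + ∑ i ∈ Finset.univ.filter (fun i : Fin ts.length => [i.1] ∉ Y),
        (shift i.1 (vY (ts.get i) (sect i.1 Y)) - e0)
  termination_by t => sizeOf t
  decreasing_by
    have h1 : ts.get i ∈ ts := List.get_mem ts i
    have h2 := List.sizeOf_lt_of_mem h1
    simp only [CTree.node.sizeOf_spec]
    omega

/-- The set of balanced labellings `X(Γ) ⊆ ℂ^{E(Γ)}`. -/
def Xbal (t : CTree α) : Set (List ℕ → ℂ) :=
  {x | ∀ v ∈ uncS t, ∀ c ∈ colS t, ∀ c' ∈ colS t, v <+: c → v <+: c' →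
    ((pathEdges t v c).map x).prod = ((pathEdges t v c').map x).prod}

/-- `Y ⊆ E(Γ)` is complete: for every finite multiset `A` of edges, the monomial
`∏_{d ∈ A} x_d` vanishes identically on `{x ∈ X(Γ) | x_y = 0 ∀ y ∈ Y}` if and only if
`A` contains at least one edge belonging to `Y`. -/
def CompleteSet (t : CTree α) (Y : Finset (List ℕ)) : Prop :=
  ∀ A : Multiset (List ℕ), (∀ d ∈ A, d ∈ edgeS t) →
    ((∀ x ∈ Xbal t, (∀ y ∈ Y, x y = 0) → (A.map x).prod = 0) ↔ ∃ d ∈ A, d ∈ Y)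

/-- A partition of a type `I`: a finite collection of nonempty pairwise disjoint
subsets covering `I`. -/
def IsPart {I : Type} (P : Finset (Finset I)) : Prop :=
  (∀ S ∈ P, S ≠ ∅) ∧ ∀ a : I, ∃! S, S ∈ P ∧ a ∈ S

/-- The tree with a single uncolored vertex whose children are the colored vertices
labelled by the elements of `S`. -/
def blockTree {I : Type} (S : Finset I) : CTree I := node (S.toList.map leaf)

/-- The colored tree `Γ_P` of a partition `P`: the root has one child for each block
`S ∈ P`, an uncolored vertex whose children are colored vertices labelled by the
elements of `S`. -/
def gammaP {I : Type} (P : Finset (Finset I)) : CTree I := node (P.toList.map blockTree)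

/-- A tree homomorphism `t → t'`, described by a map `f` on vertex positions: it sends
root to root, vertices to vertices, the two endpoints of any edge to the two endpoints
of an edge, and restricts to a label-preserving bijection between the colored
vertices. -/
def TreeHom {I : Type} (t t' : CTree I) (f : List ℕ → List ℕ) : Prop :=
  f [] = [] ∧
  (∀ p ∈ vertS t, f p ∈ vertS t') ∧
  (∀ p ∈ vertS t, p ≠ [] →
    (f p ≠ [] ∧ (f p).dropLast = f p.dropLast) ∨
    (f p.dropLast ≠ [] ∧ (f p.dropLast).dropLast = f p)) ∧
  (∀ p a, t.sub p = some (leaf a) → t'.sub (f p) = some (leaf a)) ∧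
  Set.BijOn f {p | ∃ a, t.sub p = some (leaf a)} {q | ∃ a, t'.sub q = some (leaf a)}

/-- A partition `P` of the label set is compatible with the colored tree `t` if there
exists a tree homomorphism `t → Γ_P`. -/
def Compatible {I : Type} (t : CTree I) (P : Finset (Finset I)) : Prop :=
  ∃ f, TreeHom t (gammaP P) f

/-- `C_y ⊆ I` : the labels of the colored vertices whose path from the root contains
the edge `y`. -/
def Cy {I : Type} [Fintype I] [DecidableEq I] (t : CTree I) (y : List ℕ) : Finset I :=
  Finset.univ.filter (fun a => ∃ p, t.sub p = some (leaf a) ∧ y <+: p)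

end CTree

/-!
A minimally complete set `Y` of `Γ` meets the `i`-th principal subtree either in the
principal branch `dᵢ` alone or, when `dᵢ ∉ Y`, in a minimally complete set of `Γᵢ`
(none exists when `Γᵢ` is trivial). These choices are independent for different `i`, and
every choice is realised, so `Y` is the same as a tuple of choices, with `rᵢ + 1` options
for the `i`-th branch. Counting the options uses that every vertex of a colored tree has a
colored descendant: a set containing `dᵢ` then cannot contain any other edge below it.
-/

namespace CTree

variable {α : Type}

open scoped Finset

theorem sub_nil (t : CTree α) : t.sub [] = some t := by
  cases t <;> rfl

theorem sub_leaf_cons (a : α) (i : ℕ) (p : List ℕ) : (leaf a).sub (i :: p) = none := rfl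

theorem sub_node_cons (ts : List (CTree α)) (i : ℕ) (p : List ℕ) :
    (node ts).sub (i :: p) = ts[i]?.bind (sub · p) := by
  simp only [sub]
  cases ts[i]? <;> rfl

theorem sub_node_cons_of_lt {ts : List (CTree α)} {i : ℕ} (hi : i < ts.length) (p : List ℕ) :
    (node ts).sub (i :: p) = ts[i].sub p := by
  simp [sub_node_cons, hi]

theorem lt_length_of_sub_node_cons_isSome {ts : List (CTree α)} {i : ℕ} {p : List ℕ}
    (h : ((node ts).sub (i :: p)).isSome) : i < ts.length := by
  by_contra hi
  simp [sub_node_cons, List.getElem?_eq_none (not_lt.mp hi)] at h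

theorem length_lt_sizeOf (ts : List (CTree α)) : ts.length < sizeOf ts := by
  induction ts with
  | nil => simp
  | cons t ts ih => simp only [List.length_cons, List.cons.sizeOf_spec]; omega

theorem sub_isSome_bounds {t : CTree α} {p : List ℕ} (h : (t.sub p).isSome) :
    p.length < sizeOf t ∧ ∀ x ∈ p, x < sizeOf t := by
  induction p generalizing t with
  | nil => cases t <;> simp
  | cons i p ih =>
    cases t with
    | leaf a => simp [sub_leaf_cons] at h
    | node ts =>
      have hi := lt_length_of_sub_node_cons_isSome h
      rw [sub_node_cons_of_lt hi] at h
      obtain ⟨hlen, hmem⟩ := ih h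
      have hsize : sizeOf ts[i] < sizeOf ts := List.sizeOf_lt_of_mem (List.getElem_mem hi)
      have hts := length_lt_sizeOf ts
      simp only [node.sizeOf_spec, List.length_cons, List.forall_mem_cons]
      exact ⟨by omega, by omega, fun x hx => by have := hmem x hx; omega⟩

theorem mem_allLists {m k : ℕ} {p : List ℕ} :
    p ∈ allLists m k ↔ p.length ≤ k ∧ ∀ x ∈ p, x < m := by
  induction k generalizing p with
  | zero => simp +contextual [allLists, List.length_eq_zero_iff]
  | succ k ih =>
    cases p with
    | nil => simp [allLists]
    | cons i q => simp [allLists, ih, and_left_comm]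

theorem mem_vertS {t : CTree α} {p : List ℕ} : p ∈ vertS t ↔ (t.sub p).isSome := by
  simp only [vertS, Finset.mem_filter, List.mem_toFinset, mem_allLists, and_iff_right_iff_imp]
  intro h
  exact ⟨(sub_isSome_bounds h).1.le, (sub_isSome_bounds h).2⟩

theorem mem_colS {t : CTree α} {p : List ℕ} :
    p ∈ colS t ↔ ∃ a, t.sub p = some (leaf a) := by
  simp only [colS, Finset.mem_filter, List.mem_toFinset, mem_allLists, and_iff_right_iff_imp]
  rintro ⟨a, ha⟩
  have h : (t.sub p).isSome := by simp [ha]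
  exact ⟨(sub_isSome_bounds h).1.le, (sub_isSome_bounds h).2⟩

theorem mem_edgeS {t : CTree α} {p : List ℕ} : p ∈ edgeS t ↔ p ≠ [] ∧ p ∈ vertS t :=
  Finset.mem_erase

theorem colS_subset_vertS (t : CTree α) : colS t ⊆ vertS t := by
  intro p hp
  obtain ⟨a, ha⟩ := mem_colS.mp hp
  simp [mem_vertS, ha]

theorem nil_mem_vertS (t : CTree α) : [] ∈ vertS t := by
  simp [mem_vertS, sub_nil]

theorem nil_notMem_colS_node (ts : List (CTree α)) : [] ∉ colS (node ts) := by
  simp [mem_colS, sub_nil]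

theorem colS_leaf (a : α) : colS (leaf a) = {[]} := by
  ext p
  cases p <;> simp [mem_colS, sub_nil, sub_leaf_cons]

theorem edgeS_leaf (a : α) : edgeS (leaf a) = ∅ := by
  ext p
  cases p <;> simp [mem_edgeS, mem_vertS, sub_leaf_cons]

theorem fin_cons_mem_vertS_node {ts : List (CTree α)} {k : Fin ts.length} {p : List ℕ} :
    (k :: p : List ℕ) ∈ vertS (node ts) ↔ p ∈ vertS ts[k] := by
  simp [mem_vertS, sub_node_cons_of_lt k.2]

theorem fin_cons_mem_colS_node {ts : List (CTree α)} {k : Fin ts.length} {p : List ℕ} :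
    (k :: p : List ℕ) ∈ colS (node ts) ↔ p ∈ colS ts[k] := by
  simp [mem_colS, sub_node_cons_of_lt k.2]

theorem exists_fin_cons_of_mem_vertS_node {ts : List (CTree α)} {p : List ℕ}
    (hp : p ∈ vertS (node ts)) (hne : p ≠ []) :
    ∃ (k : Fin ts.length) (q : List ℕ), p = (k : ℕ) :: q := by
  obtain _ | ⟨i, q⟩ := p
  · exact absurd rfl hne
  · exact ⟨⟨i, lt_length_of_sub_node_cons_isSome (mem_vertS.mp hp)⟩, q, rfl⟩

theorem sub_append (t : CTree α) (p q : List ℕ) :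
    t.sub (p ++ q) = (t.sub p).bind (sub · q) := by
  induction p generalizing t with
  | nil => simp [sub_nil]
  | cons i p ih =>
    cases t with
    | leaf a => simp [sub_leaf_cons]
    | node ts =>
      rw [List.cons_append, sub_node_cons, sub_node_cons]
      cases ts[i]? <;> simp [ih]

theorem exists_sub_eq_leaf : ∀ t : CTree α, (∀ p, t.sub p ≠ some (node [])) →
    ∃ c a, t.sub c = some (leaf a)
  | leaf a, _ => ⟨[], a, rfl⟩
  | node [], ht => absurd (sub_nil _) (ht [])
  | node (t₀ :: _), ht => by
    obtain ⟨c, a, hc⟩ := exists_sub_eq_leaf t₀ fun p hp =>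
      ht (0 :: p) (by simpa [sub_node_cons] using hp)
    exact ⟨0 :: c, a, by simpa [sub_node_cons] using hc⟩

theorem exists_mem_colS_prefix {t : CTree α} (ht : ∀ p, t.sub p ≠ some (node []))
    {p : List ℕ} (hp : p ∈ vertS t) : ∃ c ∈ colS t, p <+: c := by
  obtain ⟨s, hs⟩ := Option.isSome_iff_exists.mp (mem_vertS.mp hp)
  obtain ⟨c, a, hc⟩ := exists_sub_eq_leaf s fun q hq =>
    ht (p ++ q) (by simp [sub_append, hs, hq])
  exact ⟨p ++ c, mem_colS.mpr ⟨a, by simp [sub_append, hs, hc]⟩, List.prefix_append _ _⟩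

/-- The cuts of `t` are the minimally complete sets of the tree obtained by planting `t`
on a new root edge, the position `[]` standing for that edge. -/
def IsCut (t : CTree α) (Z : Finset (List ℕ)) : Prop :=
  Z ⊆ vertS t ∧ ∀ c ∈ colS t, ∃! d, d ∈ Z ∧ d <+: c

def cuts (t : CTree α) : Finset (Finset (List ℕ)) :=
  (vertS t).powerset.filter (IsCut t)

theorem mem_cuts {t : CTree α} {Z : Finset (List ℕ)} : Z ∈ cuts t ↔ IsCut t Z := by
  simp only [cuts, Finset.mem_filter, Finset.mem_powerset, and_iff_right_iff_imp]
  exact fun h => h.1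

theorem mem_MCfin {t : CTree α} {Y : Finset (List ℕ)} : Y ∈ MCfin t ↔ MinComplete t Y := by
  simp only [MCfin, Finset.mem_filter, Finset.mem_powerset, and_iff_right_iff_imp]
  exact fun h => h.1

theorem ncard_minComplete (t : CTree α) : {Y | MinComplete t Y}.ncard = #(MCfin t) := by
  rw [← Set.ncard_coe_finset]
  congr
  ext
  simp [mem_MCfin]

theorem MCfin_leaf (a : α) : MCfin (leaf a) = ∅ := by
  ext Y
  simp only [mem_MCfin, MinComplete, edgeS_leaf, colS_leaf, Finset.subset_empty,
    Finset.notMem_empty, iff_false]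
  rintro ⟨rfl, h⟩
  obtain ⟨d, ⟨hd, -⟩, -⟩ := h [] (Finset.mem_singleton_self _)
  simp at hd

theorem isCut_singleton_nil (t : CTree α) : IsCut t {[]} :=
  ⟨by simpa using nil_mem_vertS t, fun _ _ =>
    ⟨[], ⟨Finset.mem_singleton_self _, List.nil_prefix⟩,
      fun _ hd => Finset.mem_singleton.mp hd.1⟩⟩

theorem MinComplete.isCut {t : CTree α} {Y : Finset (List ℕ)} (h : MinComplete t Y) :
    IsCut t Y :=
  ⟨h.1.trans (Finset.erase_subset _ _), h.2⟩

theorem isCut_iff {t : CTree α} (ht : ∀ p, t.sub p ≠ some (node [])) {Z : Finset (List ℕ)} :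
    IsCut t Z ↔ Z = {[]} ∨ MinComplete t Z := by
  refine ⟨fun hZ => ?_, ?_⟩
  · by_cases h0 : [] ∈ Z
    · refine Or.inl (Finset.eq_singleton_iff_unique_mem.mpr ⟨h0, fun d hd => ?_⟩)
      obtain ⟨c, hc, hdc⟩ := exists_mem_colS_prefix ht (hZ.1 hd)
      exact (hZ.2 c hc).unique ⟨hd, hdc⟩ ⟨h0, List.nil_prefix⟩
    · exact Or.inr ⟨fun d hd => mem_edgeS.mpr ⟨ne_of_mem_of_not_mem hd h0, hZ.1 hd⟩, hZ.2⟩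
  · rintro (rfl | hZ)
    exacts [isCut_singleton_nil t, hZ.isCut]

theorem card_cuts {t : CTree α} (ht : ∀ p, t.sub p ≠ some (node [])) :
    #(cuts t) = #(MCfin t) + 1 := by
  have hcuts : cuts t = insert {[]} (MCfin t) := by
    ext Z
    simp [mem_cuts, mem_MCfin, isCut_iff ht]
  rw [hcuts, Finset.card_insert_of_notMem]
  intro h
  simpa [mem_edgeS] using (mem_MCfin.mp h).1 (Finset.mem_singleton_self [])

theorem mem_sect {i : ℕ} {Y : Finset (List ℕ)} {q : List ℕ} :
    q ∈ sect i Y ↔ i :: q ∈ Y := by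
  simp only [sect, Finset.mem_image, Finset.mem_filter, List.head?_eq_some_iff]
  constructor
  · rintro ⟨p, ⟨hp, r, rfl⟩, rfl⟩
    exact hp
  · exact fun h => ⟨i :: q, ⟨h, q, rfl⟩, rfl⟩

theorem existsUnique_prefix_cons_iff {Y : Finset (List ℕ)} (hY : [] ∉ Y) (i : ℕ)
    (r : List ℕ) : (∃! d, d ∈ Y ∧ d <+: i :: r) ↔ ∃! e, e ∈ sect i Y ∧ e <+: r := by
  have key : ∀ d, d ∈ Y ∧ d <+: i :: r ↔
      ∃ e, (e ∈ sect i Y ∧ e <+: r) ∧ i :: e = d := by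
    rintro (_ | ⟨j, e⟩)
    · simp [hY]
    · simp only [mem_sect, List.cons_prefix_cons, List.cons.injEq]
      constructor
      · rintro ⟨hd, rfl, hr⟩
        exact ⟨e, ⟨hd, hr⟩, rfl, rfl⟩
      · rintro ⟨e', ⟨hd, hr⟩, rfl, rfl⟩
        exact ⟨hd, rfl, hr⟩
  simp_rw [key]
  constructor
  · rintro ⟨_, ⟨e, he, rfl⟩, huniq⟩
    exact ⟨e, he, fun e' he' => List.cons_injective (huniq _ ⟨e', he', rfl⟩)⟩
  · rintro ⟨e, he, huniq⟩
    refine ⟨i :: e, ⟨e, he, rfl⟩, ?_⟩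
    rintro _ ⟨e', he', rfl⟩
    rw [huniq e' he']

theorem minComplete_node_iff {ts : List (CTree α)} {Y : Finset (List ℕ)} :
    MinComplete (node ts) Y ↔
      (∀ p ∈ Y, ∃ (k : Fin ts.length) (q : List ℕ), p = (k : ℕ) :: q) ∧
        ∀ k : Fin ts.length, IsCut ts[k] (sect k Y) := by
  constructor
  · rintro ⟨hsub, hcomp⟩
    have hnil : [] ∉ Y := fun h => (mem_edgeS.mp (hsub h)).1 rfl
    refine ⟨fun p hp => ?_, fun k => ⟨fun q hq => ?_, fun r hr => ?_⟩⟩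
    · obtain ⟨hne, hp⟩ := mem_edgeS.mp (hsub hp)
      exact exists_fin_cons_of_mem_vertS_node hp hne
    · exact fin_cons_mem_vertS_node.mp (mem_edgeS.mp (hsub (mem_sect.mp hq))).2
    · exact (existsUnique_prefix_cons_iff hnil k r).mp (hcomp _ (fin_cons_mem_colS_node.mpr hr))
  · rintro ⟨hshape, hcut⟩
    have hnil : [] ∉ Y := fun h => by
      obtain ⟨k, q, hq⟩ := hshape [] h
      exact List.cons_ne_nil _ _ hq.symm
    refine ⟨fun p hp => ?_, fun c hc => ?_⟩
    · obtain ⟨k, q, rfl⟩ := hshape p hp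
      exact mem_edgeS.mpr ⟨List.cons_ne_nil _ _,
        fin_cons_mem_vertS_node.mpr ((hcut k).1 (mem_sect.mpr hp))⟩
    · obtain ⟨k, r, rfl⟩ := exists_fin_cons_of_mem_vertS_node (colS_subset_vertS _ hc)
        (by rintro rfl; exact nil_notMem_colS_node ts hc)
      exact (existsUnique_prefix_cons_iff hnil k r).mpr
        ((hcut k).2 r (fin_cons_mem_colS_node.mp hc))

def graft {n : ℕ} (f : Fin n → Finset (List ℕ)) : Finset (List ℕ) :=
  Finset.univ.biUnion fun k => (f k).image (List.cons k)

theorem sect_graft {n : ℕ} (f : Fin n → Finset (List ℕ)) (k : Fin n) :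
    sect k (graft f) = f k := by
  ext q
  simp [mem_sect, graft, Fin.val_inj]

theorem exists_fin_cons_of_mem_graft {n : ℕ} {f : Fin n → Finset (List ℕ)} {p : List ℕ}
    (hp : p ∈ graft f) : ∃ (k : Fin n) (q : List ℕ), p = (k : ℕ) :: q := by
  obtain ⟨k, q, -, rfl⟩ := by simpa [graft] using hp
  exact ⟨k, q, rfl⟩

theorem graft_sect {n : ℕ} {Y : Finset (List ℕ)}
    (hY : ∀ p ∈ Y, ∃ (k : Fin n) (q : List ℕ), p = (k : ℕ) :: q) :
    graft (fun k : Fin n => sect k Y) = Y := by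
  ext p
  simp only [graft, Finset.mem_biUnion, Finset.mem_univ, true_and, Finset.mem_image, mem_sect]
  constructor
  · rintro ⟨k, q, hq, rfl⟩
    exact hq
  · intro hp
    obtain ⟨k, q, rfl⟩ := hY p hp
    exact ⟨k, q, hp, rfl⟩

theorem card_MCfin_node (ts : List (CTree α)) :
    #(MCfin (node ts)) = ∏ k : Fin ts.length, #(cuts ts[k]) := by
  rw [← Fintype.card_piFinset]
  refine Finset.card_nbij' (fun Y k => sect k Y) graft (fun Y hY => ?_) (fun f hf => ?_)
    (fun Y hY => ?_) (fun f _ => funext (sect_graft f))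
  · simp only [Finset.mem_coe, mem_MCfin, minComplete_node_iff] at hY
    simpa [Fintype.mem_piFinset, mem_cuts] using hY.2
  · simp only [Finset.mem_coe, Fintype.mem_piFinset, mem_cuts] at hf
    simp only [Finset.mem_coe, mem_MCfin, minComplete_node_iff, sect_graft]
    exact ⟨fun _ => exists_fin_cons_of_mem_graft, hf⟩
  · exact graft_sect (minComplete_node_iff.mp (mem_MCfin.mp hY)).1

end CTree

/-- If `Γ` has principal subtrees `Γ₁, …, Γ_m` and `r_i` denotes the
number of minimally complete subsets of `E(Γ_i)` (with `r_i = 0` when `Γ_i` is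
trivial), then the number of minimally complete subsets of `E(Γ)` is
`(r₁ + 1) ⋯ (r_m + 1)`. -/
theorem ncard_minComplete_eq_prod {α : Type} (ts : List (CTree α))
    (h : (CTree.node ts).IsColoredTree) :
    Set.ncard {Y : Finset (List ℕ) | (CTree.node ts).MinComplete Y} =
      (ts.map (fun c =>
        (match c with
          | CTree.leaf _ => 0
          | CTree.node cs =>
              Set.ncard {Y : Finset (List ℕ) | (CTree.node cs).MinComplete Y})
        + 1)).prod := by
  have hr : ∀ c : CTree α, (match c with
      | CTree.leaf _ => 0
      | CTree.node cs => Set.ncard {Y : Finset (List ℕ) | (CTree.node cs).MinComplete Y}) =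
        (CTree.MCfin c).card := by
    rintro (_ | cs) <;> simp [CTree.ncard_minComplete, CTree.MCfin_leaf]
  rw [CTree.ncard_minComplete, CTree.card_MCfin_node, ← Fin.prod_univ_fun_getElem]
  refine Finset.prod_congr rfl fun k _ => ?_
  rw [hr]
  exact CTree.card_cuts fun p hp => h.1 (k :: p) (by rwa [CTree.sub_node_cons_of_lt k.2])
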